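/- arXiv:2509.18025 — 2 statements merged into one kernel-verified Lean document; each statement's English description precedes it below -/
import Mathlib

section
/- (Definable Choice) Let 𝓡 be an o-minimal structure on ℝ and let X ⊆ ℝ^{m+n} be definable. Write π_m : ℝ^{m+n} → ℝ^m for projection onto the first m coordinates and, for a ∈ ℝ^m, write X_a = {b ∈ ℝ^n : (a,b) ∈ X}. Then there exists a definable map ρ : π_m(X) → ℝ^n such that (1) ρ(a) ∈ X_a for every a ∈ π_m(X) (so the graph of ρ is contained in X), and (2) for every a, a' ∈ π_m(X), if X_a = X_{a'} then ρ(a) = ρ(a'). -/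
/-!
Induction on `n`. Choose the first `n - 1` coordinates `ρ₁ a` by induction, applied to the
projection of `X` that forgets the last coordinate, and the last coordinate from the fiber of
`X` over `(a, ρ₁ a)`. By o-minimality this fiber is a finite union of intervals, so it has a
least point or its leftmost component is an open interval, and a point of that interval is
singled out by a formula in `<`, `+` and the fiber alone. Choosing by such a formula keeps the
graph definable, and since the choice only sees the fiber, `ρ a` depends only on `X_a`.
-/

/-- A structure on ℝ in the sense of tame geometry: axioms (S1)-(S4).
`sets n` is the collection of definable subsets of ℝ^n. -/
structure RealStructure where
  sets : ∀ n : ℕ, Set (Set (Fin n → ℝ))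
  /-- (S1) each `sets n` is a boolean algebra of subsets of ℝ^n -/
  empty_mem : ∀ n, (∅ : Set (Fin n → ℝ)) ∈ sets n
  univ_mem : ∀ n, (Set.univ : Set (Fin n → ℝ)) ∈ sets n
  union_mem : ∀ n, ∀ A B : Set (Fin n → ℝ), A ∈ sets n → B ∈ sets n → A ∪ B ∈ sets n
  compl_mem : ∀ n, ∀ A : Set (Fin n → ℝ), A ∈ sets n → Aᶜ ∈ sets n
  /-- (S2) if A ∈ 𝓡_n then ℝ × A ∈ 𝓡_{n+1} -/
  prod_left_mem : ∀ n, ∀ A : Set (Fin n → ℝ), A ∈ sets n →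
    {x : Fin (n + 1) → ℝ | (fun i : Fin n => x i.succ) ∈ A} ∈ sets (n + 1)
  /-- (S2) if A ∈ 𝓡_n then A × ℝ ∈ 𝓡_{n+1} -/
  prod_right_mem : ∀ n, ∀ A : Set (Fin n → ℝ), A ∈ sets n →
    {x : Fin (n + 1) → ℝ | (fun i : Fin n => x i.castSucc) ∈ A} ∈ sets (n + 1)
  /-- (S3) the diagonal {x : x₁ = x_n} is definable -/
  diag_mem : ∀ n : ℕ, {x : Fin (n + 1) → ℝ | x 0 = x (Fin.last n)} ∈ sets (n + 1)
  /-- (S4) projection onto the first n coordinates preserves definability -/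
  proj_mem : ∀ n, ∀ A : Set (Fin (n + 1) → ℝ), A ∈ sets (n + 1) →
    (fun (x : Fin (n + 1) → ℝ) (i : Fin n) => x i.castSucc) '' A ∈ sets n

/-- An open interval (possibly unbounded) or a point in ℝ. -/
def IsOpenIntervalOrPoint (I : Set ℝ) : Prop :=
  (∃ a b : ℝ, I = Set.Ioo a b) ∨ (∃ a : ℝ, I = Set.Ioi a) ∨ (∃ a : ℝ, I = Set.Iio a) ∨
    I = Set.univ ∨ (∃ a : ℝ, I = {a})

/-- An o-minimal structure on ℝ: a structure satisfying moreover (S5), (S6), (O1), (O2). -/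
structure OminimalStructure extends RealStructure where
  /-- (S5) singletons are definable -/
  singleton_mem : ∀ a : ℝ, {x : Fin 1 → ℝ | x 0 = a} ∈ sets 1
  /-- (S6) the graph of addition is definable -/
  add_graph_mem : {x : Fin 3 → ℝ | x 2 = x 0 + x 1} ∈ sets 3
  /-- (S6) the graph of multiplication is definable -/
  mul_graph_mem : {x : Fin 3 → ℝ | x 2 = x 0 * x 1} ∈ sets 3
  /-- (O1) the order is definable -/
  lt_mem : {x : Fin 2 → ℝ | x 0 < x 1} ∈ sets 2
  /-- (O2) the definable subsets of ℝ are exactly the finite unions of open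
  intervals and points -/
  omin : ∀ A : Set (Fin 1 → ℝ), A ∈ sets 1 ↔
    ∃ T : Finset (Set ℝ), (∀ I ∈ T, IsOpenIntervalOrPoint I) ∧
      A = (fun x : Fin 1 → ℝ => x 0) ⁻¹' ⋃ I ∈ T, I

open Set Filter Topology

namespace RealStructure

variable (R : RealStructure)

def Definable {n : ℕ} (P : (Fin n → ℝ) → Prop) : Prop :=
  {x | P x} ∈ R.sets n

variable {R}

theorem definable_mem_iff {n : ℕ} {S : Set (Fin n → ℝ)} : R.Definable (· ∈ S) ↔ S ∈ R.sets n :=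
  Iff.rfl

theorem definable_mem {n : ℕ} {S : Set (Fin n → ℝ)} (hS : S ∈ R.sets n) : R.Definable (· ∈ S) :=
  hS

theorem Definable.congr {n : ℕ} {P Q : (Fin n → ℝ) → Prop} (hP : R.Definable P)
    (h : ∀ x, P x ↔ Q x) : R.Definable Q := by
  rwa [Definable, ← Set.ext h]

theorem definable_true (n : ℕ) : R.Definable fun _ : Fin n → ℝ => True :=
  R.univ_mem n

theorem Definable.not {n : ℕ} {P : (Fin n → ℝ) → Prop} (hP : R.Definable P) :
    R.Definable fun x => ¬ P x :=
  R.compl_mem n _ hP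

theorem Definable.or {n : ℕ} {P Q : (Fin n → ℝ) → Prop} (hP : R.Definable P)
    (hQ : R.Definable Q) : R.Definable fun x => P x ∨ Q x :=
  R.union_mem n _ _ hP hQ

theorem Definable.and {n : ℕ} {P Q : (Fin n → ℝ) → Prop} (hP : R.Definable P)
    (hQ : R.Definable Q) : R.Definable fun x => P x ∧ Q x :=
  (hP.not.or hQ.not).not.congr fun _ => not_or.trans (and_congr not_not not_not)

theorem Definable.imp {n : ℕ} {P Q : (Fin n → ℝ) → Prop} (hP : R.Definable P)
    (hQ : R.Definable Q) : R.Definable fun x => P x → Q x :=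
  (hP.not.or hQ).congr fun _ => imp_iff_not_or.symm

theorem Definable.forall_fin {n k : ℕ} {P : Fin k → (Fin n → ℝ) → Prop}
    (hP : ∀ i, R.Definable (P i)) : R.Definable fun x => ∀ i, P i x := by
  induction k with
  | zero => exact (definable_true n).congr fun _ => by simp
  | succ k ih =>
    exact ((hP 0).and (ih fun i => hP i.succ)).congr fun x =>
      (Fin.forall_fin_succ (P := fun i => P i x)).symm

theorem Definable.comp_init {n : ℕ} {P : (Fin n → ℝ) → Prop} (hP : R.Definable P) :
    R.Definable fun x : Fin (n + 1) → ℝ => P (Fin.init x) :=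
  R.prod_right_mem n _ hP

theorem Definable.comp_tail {n : ℕ} {P : (Fin n → ℝ) → Prop} (hP : R.Definable P) :
    R.Definable fun x : Fin (n + 1) → ℝ => P (Fin.tail x) :=
  R.prod_left_mem n _ hP

theorem Definable.comp_cast {n n' : ℕ} (h : n = n') {P : (Fin n → ℝ) → Prop}
    (hP : R.Definable P) : R.Definable fun x : Fin n' → ℝ => P fun i => x (Fin.cast h i) := by
  subst h
  exact hP

theorem Definable.comp_castAdd {n : ℕ} {P : (Fin n → ℝ) → Prop} (hP : R.Definable P) (k : ℕ) :
    R.Definable fun x : Fin (n + k) → ℝ => P fun i => x (Fin.castAdd k i) := by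
  induction k with
  | zero => exact hP
  | succ k ih => exact ih.comp_init

theorem Definable.comp_natAdd {n : ℕ} {P : (Fin n → ℝ) → Prop} (hP : R.Definable P) (k : ℕ) :
    R.Definable fun x : Fin (k + n) → ℝ => P fun i => x (Fin.natAdd k i) := by
  induction k generalizing n with
  | zero =>
    exact (hP.comp_cast (Nat.zero_add n).symm).congr fun x =>
      Iff.of_eq (congrArg P (funext fun i => congrArg x (Fin.ext (by simp))))
  | succ k ih =>
    exact ((ih hP.comp_tail).comp_cast (by omega)).congr fun x =>
      Iff.of_eq (congrArg P (funext fun i => congrArg x (Fin.ext (by simp; omega))))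

theorem definable_exists_last {n : ℕ} {P : (Fin n → ℝ) → ℝ → Prop}
    (hP : R.Definable fun x : Fin (n + 1) → ℝ => P (Fin.init x) (x (Fin.last n))) :
    R.Definable fun x => ∃ t, P x t := by
  refine (definable_mem (R.proj_mem n _ hP)).congr fun x => ⟨?_, ?_⟩
  · rintro ⟨y, hy, rfl⟩
    exact ⟨_, hy⟩
  · rintro ⟨t, ht⟩
    exact ⟨Fin.snoc x t, by simpa using ht, by funext i; simp⟩

theorem definable_forall_last {n : ℕ} {P : (Fin n → ℝ) → ℝ → Prop}
    (hP : R.Definable fun x : Fin (n + 1) → ℝ => P (Fin.init x) (x (Fin.last n))) :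
    R.Definable fun x => ∀ t, P x t :=
  (definable_exists_last hP.not).not.congr fun _ => not_exists_not

theorem definable_exists_append {n k : ℕ} {P : (Fin n → ℝ) → (Fin k → ℝ) → Prop}
    (hP : R.Definable fun z : Fin (n + k) → ℝ =>
      P (fun i => z (Fin.castAdd k i)) (fun i => z (Fin.natAdd n i))) :
    R.Definable fun x => ∃ y, P x y := by
  induction k with
  | zero =>
    refine hP.congr fun x => ⟨fun hx => ⟨_, hx⟩, ?_⟩
    rintro ⟨y, hy⟩
    rwa [Subsingleton.elim y fun i => x (Fin.natAdd n i)] at hy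
  | succ k ih =>
    have hlast : R.Definable fun w : Fin (n + k) → ℝ =>
        ∃ t, P (fun i => w (Fin.castAdd k i)) (Fin.snoc (fun i => w (Fin.natAdd n i)) t) :=
      definable_exists_last <| hP.congr fun z => by
        rw [← Fin.snoc_init_self fun i => z (Fin.natAdd n i)]
        rfl
    refine (ih (P := fun x y => ∃ t, P x (Fin.snoc y t)) hlast).congr fun x =>
      ⟨fun ⟨_, _, h⟩ => ⟨_, h⟩, fun ⟨y, h⟩ => ⟨Fin.init y, y (Fin.last k), ?_⟩⟩
    rwa [Fin.snoc_init_self]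

theorem definable_coord_eq_of_le {n : ℕ} {i j : Fin n} (hij : i ≤ j) :
    R.Definable fun x => x i = x j := by
  obtain ⟨d, b, hn, hj⟩ : ∃ d b, (i : ℕ) + ((d + 1) + b) = n ∧ (j : ℕ) = i + d :=
    ⟨j - i, n - 1 - j, by omega, by omega⟩
  refine ((((definable_mem (R.diag_mem d)).comp_castAdd b).comp_natAdd i).comp_cast hn).congr
    fun x => ?_
  exact Iff.of_eq (congrArg₂ (· = ·) (congrArg x (Fin.ext (by simp)))
    (congrArg x (Fin.ext (by simp [hj]))))

theorem definable_coord_eq {n : ℕ} (i j : Fin n) : R.Definable fun x => x i = x j := by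
  rcases le_total i j with hij | hji
  · exact definable_coord_eq_of_le hij
  · exact (definable_coord_eq_of_le hji).congr fun _ => eq_comm

theorem Definable.comp {n k : ℕ} {P : (Fin k → ℝ) → Prop} (hP : R.Definable P)
    (σ : Fin k → Fin n) : R.Definable fun x => P fun i => x (σ i) := by
  -- `P (x ∘ σ)` iff `∃ y, P y ∧ y = x ∘ σ`: project away `y` from a definable set of pairs
  have hgraph : R.Definable fun z : Fin (n + k) → ℝ =>
      P (fun i => z (Fin.natAdd n i)) ∧ ∀ i, z (Fin.natAdd n i) = z (Fin.castAdd k (σ i)) :=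
    (hP.comp_natAdd n).and (Definable.forall_fin fun i => definable_coord_eq _ _)
  refine (definable_exists_append (P := fun x y => P y ∧ ∀ i, y i = x (σ i)) hgraph).congr
    fun x => ⟨?_, fun hx => ⟨_, hx, fun _ => rfl⟩⟩
  rintro ⟨y, hy, hyx⟩
  rwa [← funext hyx]

theorem definable_snoc_mem {M n : ℕ} {X : Set (Fin (M + 1) → ℝ)} (hX : X ∈ R.sets (M + 1))
    (σ : Fin M → Fin n) (j : Fin n) :
    R.Definable fun x => Fin.snoc (fun i => x (σ i)) (x j) ∈ X :=
  ((definable_mem hX).comp (Fin.snoc σ j)).congr fun x => by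
    show x ∘ Fin.snoc σ j ∈ X ↔ _
    rw [Fin.comp_snoc]
    rfl

end RealStructure

namespace OminimalStructure

open RealStructure

variable {R : OminimalStructure}

theorem definable_lt {n : ℕ} (i j : Fin n) : R.Definable fun x => x i < x j :=
  (definable_mem R.lt_mem).comp ![i, j]

theorem definable_le {n : ℕ} (i j : Fin n) : R.Definable fun x => x i ≤ x j :=
  (definable_lt j i).not.congr fun _ => not_lt

theorem definable_eq_const {n : ℕ} (i : Fin n) (a : ℝ) : R.Definable fun x => x i = a :=
  (definable_mem (R.singleton_mem a)).comp ![i]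

theorem definable_eq_add {n : ℕ} (i j k : Fin n) : R.Definable fun x => x i = x j + x k :=
  (definable_mem R.add_graph_mem).comp ![j, k, i]

theorem definable_eq_add_const {n : ℕ} (i j : Fin n) (a : ℝ) :
    R.Definable fun x => x i = x j + a :=
  (definable_exists_last (P := fun x s => s = a ∧ x i = x j + s)
    ((definable_eq_const (Fin.last n) a).and
      (definable_eq_add i.castSucc j.castSucc (Fin.last n)))).congr fun _ =>
    ⟨fun ⟨_, hs, h⟩ => hs ▸ h, fun h => ⟨a, rfl, h⟩⟩

theorem definable_add_eq_add {n : ℕ} (i j k l : Fin n) :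
    R.Definable fun x => x i + x j = x k + x l :=
  (definable_exists_last (P := fun x s => s = x i + x j ∧ s = x k + x l)
    ((definable_eq_add (Fin.last n) i.castSucc j.castSucc).and
      (definable_eq_add (Fin.last n) k.castSucc l.castSucc))).congr fun _ =>
    ⟨fun ⟨_, h, h'⟩ => h.symm.trans h', fun h => ⟨_, rfl, h⟩⟩

end OminimalStructure

theorem Filter.mem_or_compl_mem_biUnion {ι α : Type*} {F : Filter α} {s : ι → Set α}
    (T : Finset ι) (h : ∀ i ∈ T, s i ∈ F ∨ (s i)ᶜ ∈ F) :
    (⋃ i ∈ T, s i) ∈ F ∨ (⋃ i ∈ T, s i)ᶜ ∈ F := by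
  by_cases hT : ∃ i ∈ T, s i ∈ F
  · obtain ⟨i, hi, hs⟩ := hT
    exact Or.inl (mem_of_superset hs (subset_biUnion_of_mem (u := s) hi))
  · push Not at hT
    rw [compl_iUnion₂]
    exact Or.inr ((biInter_finset_mem T).2 fun i hi => (h i hi).resolve_left (hT i hi))

section OrdConnected

variable {α : Type*} [LinearOrder α] {I : Set α}

theorem Set.OrdConnected.mem_or_compl_mem_nhdsGT [TopologicalSpace α] [OrderTopology α]
    (hI : I.OrdConnected) (c : α) : I ∈ 𝓝[>] c ∨ Iᶜ ∈ 𝓝[>] c := by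
  refine or_iff_not_imp_right.2 fun hfreq => ?_
  change ∃ᶠ x in 𝓝[>] c, x ∈ I at hfreq
  obtain ⟨p, hpI, hcp⟩ := (hfreq.and_eventually self_mem_nhdsWithin).exists
  refine mem_of_superset (Ioo_mem_nhdsGT hcp) fun x hx => ?_
  obtain ⟨q, hqI, -, hqx⟩ := (hfreq.and_eventually (Ioo_mem_nhdsGT hx.1)).exists
  exact hI.out hqI hpI ⟨hqx.le, hx.2.le⟩

theorem Set.OrdConnected.mem_or_compl_mem_atBot [Nonempty α] (hI : I.OrdConnected) :
    I ∈ atBot ∨ Iᶜ ∈ atBot := by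
  refine or_iff_not_imp_right.2 fun hfreq => ?_
  change ∃ᶠ x in atBot, x ∈ I at hfreq
  obtain ⟨p, hpI⟩ := hfreq.exists
  refine mem_of_superset (Iic_mem_atBot p) fun x hx => ?_
  obtain ⟨q, hqI, hqx⟩ := (hfreq.and_eventually (Iic_mem_atBot x)).exists
  exact hI.out hqI hpI ⟨hqx, hx⟩

end OrdConnected

theorem IsOpenIntervalOrPoint.ordConnected {I : Set ℝ} (h : IsOpenIntervalOrPoint I) :
    I.OrdConnected := by
  rcases h with ⟨a, b, rfl⟩ | ⟨a, rfl⟩ | ⟨a, rfl⟩ | rfl | ⟨a, rfl⟩ <;> infer_instance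

/-- If `A` has no least element, its leftmost component is the open interval `(c, d)` with
`c = inf A` (or `-∞`) and `d = inf (Ioi c \ A)` (or `+∞`); the canonical point is `c + 1`,
`(c + d) / 2`, `0` or `d - 1` accordingly. -/
def IsCanonicalPoint (A : Set ℝ) (y : ℝ) : Prop :=
  IsLeast A y ∨
  (∃ c, IsGLB A c ∧ c ∉ A ∧
    (Ioi c ⊆ A ∧ y = c + 1 ∨ ∃ d, IsGLB (Ioi c \ A) d ∧ c < d ∧ y + y = c + d)) ∨
  (¬ BddBelow A ∧ (A = univ ∧ y = 0 ∨ ∃ d, IsGLB Aᶜ d ∧ d = y + 1))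

namespace IsCanonicalPoint

variable {A : Set ℝ} {y y' : ℝ}

theorem mem (h : IsCanonicalPoint A y) : y ∈ A := by
  rcases h with h | ⟨c, -, -, ⟨hsub, rfl⟩ | ⟨d, hd, hcd, hy⟩⟩ | ⟨-, ⟨rfl, -⟩ | ⟨d, hd, rfl⟩⟩
  · exact h.1
  · exact hsub (lt_add_one c)
  · by_contra hyA
    linarith [hd.1 ⟨show c < y by linarith, hyA⟩]
  · trivial
  · by_contra hyA
    linarith [hd.1 hyA]

theorem unique (h : IsCanonicalPoint A y) (h' : IsCanonicalPoint A y') : y = y' := by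
  have not_isGLB_empty (d : ℝ) : ¬ IsGLB ∅ d := fun hd => not_isTop d (isGLB_empty_iff.1 hd)
  rcases h with h | ⟨c, hc, hcA, h⟩ | ⟨hA, h⟩ <;>
    rcases h' with h' | ⟨c', hc', hcA', h'⟩ | ⟨hA', h'⟩
  · exact h.unique h'
  · exact absurd ((hc'.unique h.isGLB) ▸ h.1) hcA'
  · exact absurd h.bddBelow hA'
  · exact absurd ((hc.unique h'.isGLB) ▸ h'.1) hcA
  · obtain rfl := hc.unique hc'
    rcases h with ⟨hsub, rfl⟩ | ⟨d, hd, -, hy⟩ <;>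
      rcases h' with ⟨hsub', rfl⟩ | ⟨d', hd', -, hy'⟩
    · rfl
    · exact absurd (sdiff_eq_empty.2 hsub ▸ hd') (not_isGLB_empty d')
    · exact absurd (sdiff_eq_empty.2 hsub' ▸ hd) (not_isGLB_empty d)
    · linarith [hd.unique hd']
  · exact absurd hc.bddBelow hA'
  · exact absurd h'.bddBelow hA
  · exact absurd hc'.bddBelow hA
  · rcases h with ⟨hA, rfl⟩ | ⟨d, hd, hy⟩ <;> rcases h' with ⟨hA', rfl⟩ | ⟨d', hd', hy'⟩
    · rfl
    · exact absurd (compl_empty_iff.2 hA ▸ hd') (not_isGLB_empty d')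
    · exact absurd (compl_empty_iff.2 hA' ▸ hd) (not_isGLB_empty d)
    · linarith [hd.unique hd']

end IsCanonicalPoint

theorem exists_isCanonicalPoint {A : Set ℝ} (hne : A.Nonempty)
    (hright : ∀ c, A ∈ 𝓝[>] c ∨ Aᶜ ∈ 𝓝[>] c) (hbot : A ∈ atBot ∨ Aᶜ ∈ atBot) :
    ∃ y, IsCanonicalPoint A y := by
  by_cases hmin : ∃ y, IsLeast A y
  · obtain ⟨y, hy⟩ := hmin
    exact ⟨y, Or.inl hy⟩
  by_cases hbdd : BddBelow A
  · have hc := isGLB_csInf hne hbdd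
    set c := sInf A
    have hcA : c ∉ A := fun h => hmin ⟨c, h, hc.1⟩
    have hgerm : A ∈ 𝓝[>] c := (hright c).resolve_right fun h => by
      obtain ⟨d, hcd, hsub⟩ := mem_nhdsGT_iff_exists_Ioo_subset.1 h
      obtain ⟨t, htA, hct, htd⟩ := hc.exists_between hcd
      exact hsub ⟨hct.lt_of_ne fun e => hcA (e ▸ htA), htd⟩ htA
    obtain ⟨d₀, hcd₀, hd₀⟩ := mem_nhdsGT_iff_exists_Ioo_subset.1 hgerm
    by_cases hsub : Ioi c ⊆ A
    · exact ⟨c + 1, Or.inr (Or.inl ⟨c, hc, hcA, Or.inl ⟨hsub, rfl⟩⟩)⟩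
    have hd := isGLB_csInf (sdiff_nonempty.2 hsub) ⟨c, fun t ht => le_of_lt ht.1⟩
    have hcd : c < sInf (Ioi c \ A) :=
      lt_of_lt_of_le hcd₀ (hd.2 fun t ⟨hct, htA⟩ => not_lt.1 fun htd => htA (hd₀ ⟨hct, htd⟩))
    exact ⟨(c + sInf (Ioi c \ A)) / 2,
      Or.inr (Or.inl ⟨c, hc, hcA, Or.inr ⟨_, hd, hcd, by ring⟩⟩)⟩
  · have hgerm : A ∈ atBot := hbot.resolve_right fun h => hbdd <| by
      obtain ⟨b, hb⟩ := mem_atBot_sets.1 h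
      exact ⟨b, fun t ht => not_lt.1 fun htb => hb t htb.le ht⟩
    obtain ⟨b, hb⟩ := mem_atBot_sets.1 hgerm
    by_cases huniv : A = univ
    · exact ⟨0, Or.inr (Or.inr ⟨hbdd, Or.inl ⟨huniv, rfl⟩⟩)⟩
    have hd := isGLB_csInf (nonempty_compl.2 huniv)
      ⟨b, fun t ht => not_lt.1 fun htb => ht (hb t htb.le)⟩
    exact ⟨sInf Aᶜ - 1, Or.inr (Or.inr ⟨hbdd, Or.inr ⟨_, hd, by ring⟩⟩)⟩

noncomputable def canonicalPoint (A : Set ℝ) : ℝ :=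
  Classical.epsilon (IsCanonicalPoint A)

theorem canonicalPoint_mem {A : Set ℝ} (h : ∃ y, IsCanonicalPoint A y) :
    canonicalPoint A ∈ A :=
  (Classical.epsilon_spec h).mem

theorem isCanonicalPoint_iff_eq_canonicalPoint {A : Set ℝ} (h : ∃ y, IsCanonicalPoint A y)
    (y : ℝ) : IsCanonicalPoint A y ↔ y = canonicalPoint A :=
  ⟨fun hy => hy.unique (Classical.epsilon_spec h), fun e => e ▸ Classical.epsilon_spec h⟩

def lastFiber {k : ℕ} (X : Set (Fin (k + 1) → ℝ)) (c : Fin k → ℝ) : Set ℝ :=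
  {t | Fin.snoc c t ∈ X}

theorem lastFiber_nonempty {k : ℕ} {X : Set (Fin (k + 1) → ℝ)} {c : Fin k → ℝ}
    (hc : c ∈ Fin.init '' X) : (lastFiber X c).Nonempty := by
  obtain ⟨x, hx, rfl⟩ := hc
  exact ⟨x (Fin.last k), by rwa [lastFiber, Set.mem_ofPred_eq, Fin.snoc_init_self]⟩

namespace OminimalStructure

open RealStructure

variable {R : OminimalStructure} {k : ℕ} {X : Set (Fin (k + 1) → ℝ)}

theorem definable_lastFiber (hX : X ∈ R.sets (k + 1)) (c : Fin k → ℝ) :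
    R.Definable fun x : Fin 1 → ℝ => x 0 ∈ lastFiber X c := by
  have hfix : R.Definable fun z : Fin (1 + k) → ℝ =>
      (∀ i, z (Fin.natAdd 1 i) = c i) ∧
        Fin.snoc (fun i => z (Fin.natAdd 1 i)) (z (Fin.castAdd k 0)) ∈ X :=
    (Definable.forall_fin fun i => definable_eq_const _ (c i)).and (definable_snoc_mem hX _ _)
  refine (definable_exists_append (P := fun x y => (∀ i, y i = c i) ∧ Fin.snoc y (x 0) ∈ X)
    hfix).congr fun x => ⟨?_, fun hx => ⟨c, fun _ => rfl, by exact hx⟩⟩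
  rintro ⟨y, hy, hyX⟩
  rwa [funext hy] at hyX

theorem exists_lastFiber_eq_biUnion (hX : X ∈ R.sets (k + 1)) (c : Fin k → ℝ) :
    ∃ T : Finset (Set ℝ), (∀ I ∈ T, I.OrdConnected) ∧ lastFiber X c = ⋃ I ∈ T, I := by
  obtain ⟨T, hT, hfiber⟩ := (R.omin _).1 (definable_lastFiber hX c)
  exact ⟨T, fun I hI => (hT I hI).ordConnected, Set.ext fun t => Set.ext_iff.1 hfiber fun _ => t⟩

theorem exists_isCanonicalPoint_lastFiber (hX : X ∈ R.sets (k + 1)) {c : Fin k → ℝ}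
    (hne : (lastFiber X c).Nonempty) : ∃ y, IsCanonicalPoint (lastFiber X c) y := by
  obtain ⟨T, hT, hfiber⟩ := exists_lastFiber_eq_biUnion hX c
  rw [hfiber] at hne ⊢
  exact exists_isCanonicalPoint hne
    (fun c => mem_or_compl_mem_biUnion T fun I hI => (hT I hI).mem_or_compl_mem_nhdsGT c)
    (mem_or_compl_mem_biUnion T fun I hI => (hT I hI).mem_or_compl_mem_atBot)

theorem definable_isCanonicalPoint (hX : X ∈ R.sets (k + 1)) :
    R.Definable fun w : Fin (k + 1) → ℝ =>
      IsCanonicalPoint (lastFiber X (Fin.init w)) (w (Fin.last k)) := by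
  simp only [lastFiber, IsCanonicalPoint, IsLeast, IsGLB, IsGreatest, lowerBounds, upperBounds,
    BddBelow, Set.Nonempty, mem_ofPred_eq, subset_def, mem_Ioi, Set.mem_sdiff, mem_compl_iff,
    eq_univ_iff_forall]
  -- unfolded, a first-order formula in `<`, `+`, constants and `X`, built connective by connective
  repeat' first
    | apply Definable.or | apply Definable.and | apply Definable.not | apply Definable.imp
    | apply definable_exists_last | apply definable_forall_last
    | apply definable_lt | apply definable_le | apply definable_snoc_mem hX
    | apply definable_eq_const | apply definable_eq_add_const | apply definable_add_eq_add

end OminimalStructure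

theorem Fin.init_append {α : Type*} {m n : ℕ} (a : Fin m → α) (b : Fin (n + 1) → α) :
    Fin.init (n := m + n) (Fin.append (n := n + 1) a b) = Fin.append a (Fin.init b) := by
  conv_lhs => rw [← Fin.snoc_init_self b, Fin.append_snoc]
  exact Fin.init_snoc _ _

theorem Fin.exists_eq_append {α : Type*} {m n : ℕ} (z : Fin (m + n) → α) :
    ∃ a b, z = Fin.append a b :=
  ⟨_, _, Fin.append_castAdd_natAdd.symm⟩

section Selection

variable {m n : ℕ}

def proj (m n : ℕ) (z : Fin (m + n) → ℝ) : Fin m → ℝ :=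
  fun i => z (Fin.castAdd n i)

def fiber (X : Set (Fin (m + n) → ℝ)) (a : Fin m → ℝ) : Set (Fin n → ℝ) :=
  {b | Fin.append a b ∈ X}

def selectionGraph (X : Set (Fin (m + n) → ℝ)) (ρ : (Fin m → ℝ) → Fin n → ℝ) :
    Set (Fin (m + n) → ℝ) :=
  {z | proj m n z ∈ proj m n '' X ∧ (fun i => z (Fin.natAdd m i)) = ρ (proj m n z)}

structure IsDefinableSelection (R : RealStructure) (X : Set (Fin (m + n) → ℝ))
    (ρ : (Fin m → ℝ) → Fin n → ℝ) : Prop where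
  definable_graph : selectionGraph X ρ ∈ R.sets (m + n)
  append_mem : ∀ a ∈ proj m n '' X, Fin.append a (ρ a) ∈ X
  eq_of_fiber_eq : ∀ a ∈ proj m n '' X, ∀ a' ∈ proj m n '' X, fiber X a = fiber X a' → ρ a = ρ a'

theorem proj_append (a : Fin m → ℝ) (b : Fin n → ℝ) : proj m n (Fin.append a b) = a :=
  funext fun i => Fin.append_left a b i

theorem append_mem_selectionGraph {X : Set (Fin (m + n) → ℝ)} {ρ : (Fin m → ℝ) → Fin n → ℝ}
    (a : Fin m → ℝ) (b : Fin n → ℝ) :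
    Fin.append a b ∈ selectionGraph X ρ ↔ a ∈ proj m n '' X ∧ b = ρ a := by
  simp only [selectionGraph, Set.mem_ofPred_eq, proj_append, Fin.append_right]

theorem proj_image_init (X : Set (Fin (m + n + 1) → ℝ)) :
    proj m n '' (Fin.init '' X) = proj m (n + 1) '' X := by
  rw [Set.image_image]
  rfl

theorem fiber_image_init (X : Set (Fin (m + n + 1) → ℝ)) (a : Fin m → ℝ) :
    fiber (Fin.init '' X) a = Fin.init '' fiber (n := n + 1) X a := by
  ext b
  constructor
  · rintro ⟨x, hx, hxb⟩
    refine ⟨Fin.snoc b (x (Fin.last _)), ?_, Fin.init_snoc _ _⟩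
    rw [fiber, Set.mem_ofPred_eq, Fin.append_snoc, ← hxb]
    exact (Fin.snoc_init_self x).symm ▸ hx
  · rintro ⟨b, hb, rfl⟩
    exact ⟨_, hb, Fin.init_append a b⟩

theorem lastFiber_append (X : Set (Fin (m + n + 1) → ℝ)) (a : Fin m → ℝ) (b : Fin n → ℝ) :
    lastFiber X (Fin.append a b) = {t | Fin.snoc b t ∈ fiber (n := n + 1) X a} := by
  ext t
  simp only [lastFiber, fiber, Set.mem_ofPred_eq, Fin.append_snoc]

theorem isDefinableSelection_elim0 {R : RealStructure} {X : Set (Fin (m + 0) → ℝ)}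
    (hX : X ∈ R.sets (m + 0)) : IsDefinableSelection R X fun _ => Fin.elim0 := by
  have hproj (a : Fin m → ℝ) : a ∈ proj m 0 '' X ↔ Fin.append a Fin.elim0 ∈ X := by
    refine ⟨?_, fun ha => ⟨_, ha, proj_append _ _⟩⟩
    rintro ⟨x, hx, rfl⟩
    obtain ⟨a, b, rfl⟩ := Fin.exists_eq_append x
    rwa [proj_append, ← Subsingleton.elim b Fin.elim0]
  refine ⟨?_, fun a ha => (hproj a).1 ha, fun _ _ _ _ _ => Subsingleton.elim _ _⟩
  refine (congrArg (· ∈ R.sets _) (Set.ext fun z => ?_)).mpr hX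
  obtain ⟨a, b, rfl⟩ := Fin.exists_eq_append z
  rw [Subsingleton.elim b Fin.elim0, append_mem_selectionGraph, hproj]
  exact and_iff_left rfl

open RealStructure OminimalStructure in
theorem IsDefinableSelection.snoc {R : OminimalStructure} {X : Set (Fin (m + n + 1) → ℝ)}
    (hX : X ∈ R.sets (m + n + 1)) {ρ : (Fin m → ℝ) → Fin n → ℝ}
    (hρ : IsDefinableSelection R.toRealStructure (Fin.init '' X) ρ) :
    IsDefinableSelection (n := n + 1) R.toRealStructure X
      fun a => Fin.snoc (ρ a) (canonicalPoint (lastFiber X (Fin.append a (ρ a)))) := by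
  have hproj := proj_image_init X
  have hcan (a) (ha : a ∈ proj m (n + 1) '' X) :
      ∃ y, IsCanonicalPoint (lastFiber X (Fin.append a (ρ a))) y :=
    exists_isCanonicalPoint_lastFiber hX (lastFiber_nonempty (hρ.append_mem a (hproj ▸ ha)))
  refine ⟨?_, fun a ha => ?_, fun a ha a' ha' hfiber => ?_⟩
  · have hgraph : R.Definable fun z : Fin (m + n + 1) → ℝ =>
        Fin.init z ∈ selectionGraph (Fin.init '' X) ρ ∧
          IsCanonicalPoint (lastFiber X (Fin.init z)) (z (Fin.last _)) :=
      (definable_mem hρ.definable_graph).comp_init.and (definable_isCanonicalPoint hX)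
    refine definable_mem_iff.1 (hgraph.congr fun z => ?_)
    obtain ⟨c, t, rfl⟩ : ∃ c t, Fin.snoc c t = z := ⟨_, _, Fin.snoc_init_self z⟩
    obtain ⟨a, b, rfl⟩ := Fin.exists_eq_append c
    rw [Fin.init_snoc, Fin.snoc_last, ← Fin.append_snoc, append_mem_selectionGraph,
      append_mem_selectionGraph, Fin.snoc_inj, hproj]
    constructor
    · rintro ⟨⟨ha, rfl⟩, ht⟩
      exact ⟨ha, rfl, (isCanonicalPoint_iff_eq_canonicalPoint (hcan a ha) t).1 ht⟩
    · rintro ⟨ha, rfl, rfl⟩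
      exact ⟨⟨ha, rfl⟩, (isCanonicalPoint_iff_eq_canonicalPoint (hcan a ha) _).2 rfl⟩
  · rw [Fin.append_snoc]
    exact canonicalPoint_mem (hcan a ha)
  · have hρa : ρ a = ρ a' := hρ.eq_of_fiber_eq a (hproj ▸ ha) a' (hproj ▸ ha')
      (by rw [fiber_image_init, fiber_image_init, hfiber])
    simp only [lastFiber_append, hρa, hfiber]

end Selection

/-- Definable Choice: for a definable X ⊆ ℝ^{m+n} there is a definable selection
ρ : π_m(X) → ℝ^n of the fibers of X, depending only on the fiber. -/
theorem definable_choice (R : OminimalStructure) (m n : ℕ) (X : Set (Fin (m + n) → ℝ))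
    (hX : X ∈ R.sets (m + n)) :
    ∃ ρ : (Fin m → ℝ) → (Fin n → ℝ),
      -- the graph of ρ restricted to π_m(X) is definable
      {z : Fin (m + n) → ℝ |
          (fun i : Fin m => z (Fin.castAdd n i)) ∈
            (fun (x : Fin (m + n) → ℝ) (i : Fin m) => x (Fin.castAdd n i)) '' X ∧
          (fun i : Fin n => z (Fin.natAdd m i)) =
            ρ (fun i : Fin m => z (Fin.castAdd n i))} ∈ R.sets (m + n) ∧
      -- (1) ρ(a) ∈ X_a for every a ∈ π_m(X)
      (∀ a ∈ (fun (x : Fin (m + n) → ℝ) (i : Fin m) => x (Fin.castAdd n i)) '' X,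
        Fin.append a (ρ a) ∈ X) ∧
      -- (2) ρ depends only on the fiber
      (∀ a ∈ (fun (x : Fin (m + n) → ℝ) (i : Fin m) => x (Fin.castAdd n i)) '' X,
        ∀ a' ∈ (fun (x : Fin (m + n) → ℝ) (i : Fin m) => x (Fin.castAdd n i)) '' X,
          {b : Fin n → ℝ | Fin.append a b ∈ X} = {b : Fin n → ℝ | Fin.append a' b ∈ X} →
            ρ a = ρ a') := by
  suffices ∃ ρ, IsDefinableSelection R.toRealStructure X ρ by
    obtain ⟨ρ, hgraph, hmem, hfiber⟩ := this
    exact ⟨ρ, hgraph, hmem, hfiber⟩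
  induction n with
  | zero => exact ⟨_, isDefinableSelection_elim0 hX⟩
  | succ n ih =>
    obtain ⟨ρ, hρ⟩ := ih (Fin.init '' X) (R.proj_mem _ X hX)
    exact ⟨_, hρ.snoc hX⟩
end

section
/- (Existence of one-sided limits) Let 𝓡 be an o-minimal structure on ℝ and let f : (a,b) → ℝ be definable, where a < b and a may be -∞ and b may be +∞. Then for each c ∈ [a, b) the one-sided limit lim_{t ↓ c} f(t) exists in the extended reals ℝ ∪ {−∞, +∞}. -/
open Filter Set Topology

def Decides {α : Type*} (l : Filter α) (s : Set α) : Prop := s ∈ l ∨ sᶜ ∈ l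

namespace Decides

variable {α : Type*} {l : Filter α} {s t : Set α}

theorem compl (h : Decides l s) : Decides l sᶜ := by
  rw [Decides, compl_compl]
  exact h.symm

theorem union (hs : Decides l s) (ht : Decides l t) : Decides l (s ∪ t) := by
  rcases hs with hs | hs
  · exact .inl (mem_of_superset hs subset_union_left)
  rcases ht with ht | ht
  · exact .inl (mem_of_superset ht subset_union_right)
  · exact .inr (compl_union s t ▸ inter_mem hs ht)

theorem inter (hs : Decides l s) (ht : Decides l t) : Decides l (s ∩ t) := by
  simpa using (hs.compl.union ht.compl).compl

theorem congr (h : s =ᶠ[l] t) (hs : Decides l s) : Decides l t :=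
  hs.imp (congr_sets h.mem_iff).1 (congr_sets h.compl.mem_iff).1

end Decides

theorem decides_biUnion_finset {α ι : Type*} {l : Filter α} {T : Finset ι} {s : ι → Set α}
    (h : ∀ i ∈ T, Decides l (s i)) : Decides l (⋃ i ∈ T, s i) := by
  classical
  induction T using Finset.induction_on with
  | empty => exact .inr (by simp)
  | insert i T _ ih =>
    rw [Finset.set_biUnion_insert]
    exact (h i (Finset.mem_insert_self i T)).union
      (ih fun j hj => h j (Finset.mem_insert_of_mem hj))

theorem decides_of_isOpenIntervalOrPoint {l : Filter ℝ} (hl : ∀ p : ℝ, Ioi p ∈ l ∨ Iio p ∈ l)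
    {I : Set ℝ} (hI : IsOpenIntervalOrPoint I) : Decides l I := by
  have hIoi (p : ℝ) : Decides l (Ioi p) :=
    (hl p).imp_right fun h => by rw [compl_Ioi]; exact mem_of_superset h Iio_subset_Iic_self
  have hIio (p : ℝ) : Decides l (Iio p) :=
    (hl p).symm.imp_right fun h => by rw [compl_Iio]; exact mem_of_superset h Ioi_subset_Ici_self
  rcases hI with ⟨p, q, rfl⟩ | ⟨p, rfl⟩ | ⟨p, rfl⟩ | rfl | ⟨p, rfl⟩
  · rw [← Ioi_inter_Iio]
    exact (hIoi p).inter (hIio q)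
  · exact hIoi p
  · exact hIio p
  · exact .inl univ_mem
  · exact .inr ((hl p).elim (mem_of_superset · fun _ ht => ht.ne')
      (mem_of_superset · fun _ ht => ht.ne))

theorem exists_tendsto_of_decides_lt {α β : Type*} [CompleteLinearOrder β] [DenselyOrdered β]
    [TopologicalSpace β] [OrderTopology β] {l : Filter α} {g : α → β}
    (h : ∀ r, Decides l {t | g t < r}) : ∃ L, Tendsto g l (𝓝 L) := by
  refine ⟨sInf {r | ∀ᶠ t in l, g t < r}, tendsto_order.2 ⟨fun r hr => ?_, fun r hr => ?_⟩⟩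
  · obtain ⟨r', hrr', hr'⟩ := exists_between hr
    have hr'_not : ¬ ∀ᶠ t in l, g t < r' := fun h' => not_le.2 hr' (sInf_le h')
    exact Eventually.mono ((h r').resolve_left hr'_not) fun t ht => hrr'.trans_le (not_lt.1 ht)
  · obtain ⟨r', hr', hr'r⟩ := sInf_lt_iff.1 hr
    exact hr'.mono fun t ht => ht.trans hr'r

namespace RealStructure

variable (R : RealStructure)

theorem inter_mem {n : ℕ} {A B : Set (Fin n → ℝ)} (hA : A ∈ R.sets n) (hB : B ∈ R.sets n) :
    A ∩ B ∈ R.sets n := by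
  simpa [compl_union] using
    R.compl_mem n _ (R.union_mem n _ _ (R.compl_mem n _ hA) (R.compl_mem n _ hB))

theorem setOf_exists_mem {n : ℕ} {P : (Fin n → ℝ) → ℝ → Prop}
    (h : {x : Fin (n + 1) → ℝ | P (fun i => x i.castSucc) (x (Fin.last n))} ∈ R.sets (n + 1)) :
    {y | ∃ z, P y z} ∈ R.sets n := by
  convert R.proj_mem n _ h using 1
  ext y
  constructor
  · rintro ⟨z, hz⟩
    exact ⟨Fin.snoc y z, by simpa using hz, by simp⟩
  · rintro ⟨x, hx, rfl⟩
    exact ⟨_, hx⟩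

end RealStructure

namespace OminimalStructure

variable (R : OminimalStructure)

theorem setOf_lt_const_mem (r : ℝ) : {x : Fin 2 → ℝ | x 1 < r} ∈ R.sets 2 := by
  have h : {x : Fin 3 → ℝ | x 1 < x 2 ∧ x 2 = r} ∈ R.sets 3 :=
    R.inter_mem (R.prod_left_mem 2 _ R.lt_mem)
      (R.prod_left_mem 2 _ (R.prod_left_mem 1 _ (R.singleton_mem r)))
  simpa using R.setOf_exists_mem (P := fun y z => y 1 < z ∧ z = r) h

theorem setOf_sublevel_mem {a b : EReal} {f : ℝ → ℝ}
    (hf : {x : Fin 2 → ℝ | a < (x 0 : EReal) ∧ (x 0 : EReal) < b ∧ x 1 = f (x 0)} ∈ R.sets 2)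
    (r : ℝ) :
    {x : Fin 1 → ℝ | a < (x 0 : EReal) ∧ (x 0 : EReal) < b ∧ f (x 0) < r} ∈ R.sets 1 := by
  have h := R.setOf_exists_mem
    (P := fun y z => (a < (y 0 : EReal) ∧ (y 0 : EReal) < b ∧ z = f (y 0)) ∧ z < r)
    (R.inter_mem hf (R.setOf_lt_const_mem r))
  simpa [and_assoc] using h

theorem decides_of_mem_sets_one {l : Filter ℝ} (hl : ∀ p : ℝ, Ioi p ∈ l ∨ Iio p ∈ l)
    {A : Set (Fin 1 → ℝ)} (hA : A ∈ R.sets 1) : Decides l {t | (fun _ => t) ∈ A} := by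
  obtain ⟨T, hT, rfl⟩ := (R.omin A).1 hA
  exact decides_biUnion_finset fun I hI => decides_of_isOpenIntervalOrPoint hl (hT I hI)

end OminimalStructure

theorem Ioi_mem_or_Iio_mem_comap_nhdsGT (c : EReal) (p : ℝ) :
    Ioi p ∈ comap Real.toEReal (𝓝[>] c) ∨ Iio p ∈ comap Real.toEReal (𝓝[>] c) := by
  rcases le_or_gt (p : EReal) c with h | h
  · exact .inl (mem_comap.2 ⟨Ioi c, self_mem_nhdsWithin,
      fun t ht => EReal.coe_lt_coe_iff.1 (h.trans_lt ht)⟩)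
  · exact .inr (mem_comap.2 ⟨Iio p, mem_nhdsWithin_of_mem_nhds (Iio_mem_nhds h),
      fun t ht => EReal.coe_lt_coe_iff.1 ht⟩)

theorem setOf_mem_Ioo_mem_comap_nhdsGT {a b c : EReal} (hac : a ≤ c) (hcb : c < b) :
    {t : ℝ | a < t ∧ t < b} ∈ comap Real.toEReal (𝓝[>] c) :=
  mem_comap.2 ⟨Ioo a b, Ioo_mem_nhdsGT_of_mem ⟨hac, hcb⟩, fun _ ht => ht⟩

theorem existence_of_one_sided_limits_general (R : OminimalStructure) (a b : EReal)
    (f : ℝ → ℝ)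
    (hf : {x : Fin 2 → ℝ | a < (x 0 : EReal) ∧ (x 0 : EReal) < b ∧ x 1 = f (x 0)} ∈ R.sets 2)
    (c : EReal) (hac : a ≤ c) (hcb : c < b) :
    ∃ L : EReal, Filter.Tendsto (fun t : ℝ => (f t : EReal))
      (Filter.comap Real.toEReal (nhdsWithin c (Set.Ioi c))) (nhds L) := by
  have hdom := setOf_mem_Ioo_mem_comap_nhdsGT hac hcb
  have hsublevel (r : ℝ) : Decides (comap Real.toEReal (𝓝[>] c)) {t | f t < r} :=
    (R.decides_of_mem_sets_one (Ioi_mem_or_Iio_mem_comap_nhdsGT c)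
      (R.setOf_sublevel_mem hf r)).congr <| by
        filter_upwards [hdom] with t ht using propext ⟨fun h => h.2.2, fun h => ⟨ht.1, ht.2, h⟩⟩
  refine exists_tendsto_of_decides_lt fun r => ?_
  induction r using EReal.rec with
  | bot => exact .inr (by simp)
  | top => exact .inl (by simp)
  | coe r => exact_mod_cast hsublevel r

/-- Existence of one-sided limits: a definable function on an interval (a, b)
(with possibly infinite endpoints) has a one-sided limit, in the extended reals,
from the right at every c ∈ [a, b). The filter `Filter.comap Real.toEReal (nhdsWithin c (Set.Ioi c))`
is the filter of real numbers t tending to c from the right (it is `atBot` when c = -∞). -/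
theorem existence_of_one_sided_limits (R : OminimalStructure) (a b : EReal) (hab : a < b)
    (f : ℝ → ℝ)
    (hf : {x : Fin 2 → ℝ | a < (x 0 : EReal) ∧ (x 0 : EReal) < b ∧ x 1 = f (x 0)} ∈ R.sets 2)
    (c : EReal) (hac : a ≤ c) (hcb : c < b) :
    ∃ L : EReal, Filter.Tendsto (fun t : ℝ => (f t : EReal))
      (Filter.comap Real.toEReal (nhdsWithin c (Set.Ioi c))) (nhds L) :=
  existence_of_one_sided_limits_general R a b f hf c hac hcb
end
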